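/- Let α ∈ [1,2), s ∈ ℝ, δ > 0 and ε ∈ (0,1). For N ≥ 2 set γ = N^{−(α+δ)}, Q₁⁺ = [γ/2, γ] × [γ^ε, 2γ^ε], Q₂⁺ = [N, N+γ] × [−γ^ε, −γ^ε/2], Q₁⁻ = −Q₁⁺, Q₂⁻ = −Q₂⁺, and let f_N ∈ L²(ℝ²) be the function whose Fourier transform is F(f_N)(ξ,μ) = γ^{−(1+ε)/2} (1_{Q₁⁺}(ξ,μ) + 1_{Q₁⁻}(ξ,μ)) + γ^{−(1+ε)/2} N^{−αs} (1_{Q₂⁺}(ξ,μ) + 1_{Q₂⁻}(ξ,μ)). Then there is a constant C = C(α,s,δ,ε) > 0 such that ‖f_N‖_{E^s} ≤ C for every N ≥ 2. -/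

import Mathlib

/-!
Write `c = γ^{-(1+ε)/2}`. Since the weight is even, each of the four indicator pieces of `f_N`
contributes at most `sup (weight · coefficient) · |Q|^{1/2}`. Both rectangles have area
`γ^{1+ε}/2`, which `c` exactly compensates. On `Q₁` the frequencies are bounded, so the weight is
`O(1)`; on `Q₂` one has `|ξ|^α + μ² ≍ N^α`, so the weight is comparable to `N^{αs}`, which the
factor `N^{-αs}` cancels. This gives `C = 4 · 26^{|s|/2}`.
-/

open MeasureTheory Set

noncomputable section

/-- The weight `⟨|ξ|^α + μ²⟩^s` defining the `E^s` norm on the Fourier side. -/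
def wgt (α s : ℝ) (ζ : ℝ × ℝ) : ℝ := (1 + (|ζ.1| ^ α + ζ.2 ^ 2) ^ 2) ^ (s / 2)

open scoped ENNReal

lemma Real.rpow_le_rpow_abs_of_one_le {x K : ℝ} (hx : 1 ≤ x) (hxK : x ≤ K) (s : ℝ) :
    x ^ s ≤ K ^ |s| := by
  rcases le_or_gt 0 s with hs | hs
  · rw [abs_of_nonneg hs]
    exact Real.rpow_le_rpow (by linarith) hxK hs
  · calc x ^ s ≤ 1 := Real.rpow_le_one_of_one_le_of_nonpos hx hs.le
      _ ≤ K ^ |s| := Real.one_le_rpow (hx.trans hxK) (abs_nonneg s)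

lemma measurable_wgt (α s : ℝ) : Measurable (wgt α s) := by
  unfold wgt; fun_prop

lemma wgt_nonneg (α s : ℝ) (ζ : ℝ × ℝ) : 0 ≤ wgt α s ζ := by
  unfold wgt; positivity

lemma wgt_neg (α s : ℝ) (ζ : ℝ × ℝ) : wgt α s (-ζ) = wgt α s ζ := by
  simp [wgt]

lemma wgt_mul_rpow_neg_le {α s t : ℝ} {ζ : ℝ × ℝ} (ht : 1 ≤ t)
    (hlo : t ^ 2 ≤ 1 + (|ζ.1| ^ α + ζ.2 ^ 2) ^ 2) (hhi : |ζ.1| ^ α + ζ.2 ^ 2 ≤ 5 * t) :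
    wgt α s ζ * t ^ (-s) ≤ 26 ^ (|s| / 2) := by
  set y := 1 + (|ζ.1| ^ α + ζ.2 ^ 2) ^ 2
  have ht0 : 0 < t := by linarith
  have hu : 0 ≤ |ζ.1| ^ α + ζ.2 ^ 2 := by positivity
  have hy : y ≤ 26 * t ^ 2 := by nlinarith
  have ht2 : (t ^ 2) ^ (s / 2) = t ^ s := by
    rw [← Real.rpow_natCast, ← Real.rpow_mul ht0.le]; ring_nf
  have hquot : wgt α s ζ * t ^ (-s) = (y / t ^ 2) ^ (s / 2) := by
    rw [Real.div_rpow (by positivity) (by positivity), ht2, Real.rpow_neg ht0.le,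
      div_eq_mul_inv, wgt]
  rw [hquot, show |s| / 2 = |s / 2| by rw [abs_div, abs_two]]
  exact Real.rpow_le_rpow_abs_of_one_le ((one_le_div (by positivity)).2 hlo)
    ((div_le_iff₀ (by positivity)).2 hy) _

lemma wgt_le_of_mem_Icc_prod_Icc {α s γ b : ℝ} {ζ : ℝ × ℝ} (hα : 0 ≤ α) (hγ : γ ≤ 1)
    (hb : b ≤ 1) (hζ : ζ ∈ Icc (γ / 2) γ ×ˢ Icc b (2 * b)) :
    wgt α s ζ ≤ 26 ^ (|s| / 2) := by
  obtain ⟨⟨hξ₁, hξ₂⟩, hμ₁, hμ₂⟩ := hζ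
  have hξ : |ζ.1| ^ α ≤ 1 :=
    Real.rpow_le_one (abs_nonneg _) (abs_le.2 ⟨by linarith, by linarith⟩) hα
  have hμ : ζ.2 ^ 2 ≤ 4 := by nlinarith
  simpa using wgt_mul_rpow_neg_le (α := α) (s := s) (ζ := ζ) le_rfl (by nlinarith) (by linarith)

lemma wgt_mul_rpow_le_of_mem_Icc_prod_Icc {α s N γ b : ℝ} {ζ : ℝ × ℝ} (hα : α ∈ Icc 0 2)
    (hN : 1 ≤ N) (hγ : γ ≤ N) (hb : b ≤ 1) (hζ : ζ ∈ Icc N (N + γ) ×ˢ Icc (-b) (-b / 2)) :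
    wgt α s ζ * N ^ (-(α * s)) ≤ 26 ^ (|s| / 2) := by
  obtain ⟨⟨hξ₁, hξ₂⟩, hμ₁, hμ₂⟩ := hζ
  have hN0 : 0 ≤ N := by linarith
  have ht : 1 ≤ N ^ α := Real.one_le_rpow hN hα.1
  have hξ : N ^ α ≤ |ζ.1| ^ α := by
    rw [abs_of_nonneg (by linarith)]; exact Real.rpow_le_rpow hN0 hξ₁ hα.1
  have hξ' : |ζ.1| ^ α ≤ 4 * N ^ α :=
    calc |ζ.1| ^ α ≤ (2 * N) ^ α :=
          Real.rpow_le_rpow (abs_nonneg _) (abs_le.2 ⟨by linarith, by linarith⟩) hα.1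
      _ = 2 ^ α * N ^ α := Real.mul_rpow zero_le_two hN0
      _ ≤ 2 ^ (2 : ℝ) * N ^ α := by
          gcongr
          · norm_num
          · exact hα.2
      _ = 4 * N ^ α := by norm_num
  have hμ : ζ.2 ^ 2 ≤ 1 := by nlinarith
  rw [neg_mul_eq_mul_neg, Real.rpow_mul hN0]
  exact wgt_mul_rpow_neg_le ht (by nlinarith) (by nlinarith)

lemma ENNReal.ofReal_rpow_inv_two (v : ℝ) :
    ENNReal.ofReal v ^ (2 : ℝ≥0∞).toReal⁻¹ = ENNReal.ofReal √v := by
  rcases le_total 0 v with hv | hv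
  · rw [Real.sqrt_eq_rpow, ← ENNReal.ofReal_rpow_of_nonneg hv (by norm_num)]
    norm_num
  · simp [ENNReal.ofReal_of_nonpos hv, Real.sqrt_eq_zero'.2 hv]

lemma eLpNorm_two_indicator_le {X E : Type*} [MeasurableSpace X] [NormedAddCommGroup E]
    {μ : Measure X} {S : Set X} (hS : MeasurableSet S) {g : X → E} {M v : ℝ}
    (hg : ∀ x ∈ S, ‖g x‖ ≤ M) (hv : μ S ≤ ENNReal.ofReal v) :
    eLpNorm (S.indicator g) 2 μ ≤ ENNReal.ofReal (√v * M) :=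
  calc eLpNorm (S.indicator g) 2 μ = eLpNorm g 2 (μ.restrict S) :=
        eLpNorm_indicator_eq_eLpNorm_restrict hS
    _ ≤ μ S ^ (2 : ℝ≥0∞).toReal⁻¹ * ENNReal.ofReal M := by
        simpa using eLpNorm_le_of_ae_bound (μ := μ.restrict S) (p := 2)
          (ae_restrict_of_forall_mem hS hg)
    _ ≤ ENNReal.ofReal v ^ (2 : ℝ≥0∞).toReal⁻¹ * ENNReal.ofReal M := by gcongr
    _ = ENNReal.ofReal (√v * M) := by
        rw [ENNReal.ofReal_rpow_inv_two, ENNReal.ofReal_mul (Real.sqrt_nonneg v)]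

lemma volume_Icc_prod_Icc (a b c d : ℝ) :
    volume (Icc a b ×ˢ Icc c d) = ENNReal.ofReal (b - a) * ENNReal.ofReal (d - c) := by
  rw [Measure.volume_eq_prod, Measure.prod_prod, Real.volume_Icc, Real.volume_Icc]

lemma eLpNorm_wgt_mul_indicator_add_indicator_neg_le {α s c M v : ℝ} {S : Set (ℝ × ℝ)}
    (hS : MeasurableSet S) (hc : 0 ≤ c) (hM : ∀ ζ ∈ S, wgt α s ζ * c ≤ M)
    (hv : volume S ≤ ENNReal.ofReal v) :
    eLpNorm (fun ζ => wgt α s ζ *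
        (c * (S.indicator (fun _ => (1 : ℝ)) ζ + (-S).indicator (fun _ => (1 : ℝ)) ζ))) 2 volume
      ≤ ENNReal.ofReal (2 * (√v * M)) := by
  have hsplit : (fun ζ => wgt α s ζ *
        (c * (S.indicator (fun _ => (1 : ℝ)) ζ + (-S).indicator (fun _ => (1 : ℝ)) ζ))) =
      S.indicator (fun ζ => wgt α s ζ * c) + (-S).indicator (fun ζ => wgt α s ζ * c) := by
    ext ζ
    by_cases h₁ : ζ ∈ S <;> by_cases h₂ : ζ ∈ -S <;> simp [h₁, h₂, mul_add]
  have hmeas : Measurable fun ζ => wgt α s ζ * c := (measurable_wgt α s).mul_const c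
  have hnorm : ∀ ζ ∈ S, ‖wgt α s ζ * c‖ ≤ M := fun ζ hζ =>
    (Real.norm_of_nonneg (mul_nonneg (wgt_nonneg α s ζ) hc)).trans_le (hM ζ hζ)
  have hnorm_neg : ∀ ζ ∈ -S, ‖wgt α s ζ * c‖ ≤ M := fun ζ hζ => by
    simpa only [wgt_neg, neg_neg] using hnorm (-ζ) hζ
  rw [hsplit, ENNReal.ofReal_mul zero_le_two, ENNReal.ofReal_ofNat, two_mul]
  exact (eLpNorm_add_le (hmeas.indicator hS).aestronglyMeasurable
    (hmeas.indicator hS.neg).aestronglyMeasurable one_le_two).trans <| add_le_add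
      (eLpNorm_two_indicator_le hS hnorm hv)
      (eLpNorm_two_indicator_le hS.neg hnorm_neg (by rwa [Measure.measure_neg]))

lemma eLpNorm_mul_add_le {X : Type*} [MeasurableSpace X] {μ : Measure X} {p : ℝ≥0∞} (hp : 1 ≤ p)
    {w f g : X → ℝ} (hf : AEStronglyMeasurable (fun x => w x * f x) μ)
    (hg : AEStronglyMeasurable (fun x => w x * g x) μ) :
    eLpNorm (fun x => w x * (f x + g x)) p μ ≤
      eLpNorm (fun x => w x * f x) p μ + eLpNorm (fun x => w x * g x) p μ := by
  simp only [mul_add]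
  exact eLpNorm_add_le hf hg hp

lemma measurable_wgt_mul_indicator_add_indicator_neg (α s c : ℝ) {S : Set (ℝ × ℝ)}
    (hS : MeasurableSet S) :
    Measurable fun ζ => wgt α s ζ *
      (c * (S.indicator (fun _ => (1 : ℝ)) ζ + (-S).indicator (fun _ => (1 : ℝ)) ζ)) := by
  have := hS.neg
  have := measurable_wgt α s
  fun_prop (disch := assumption)

lemma eLpNorm_wgt_low_freq_le {α s γ b c : ℝ} (hα : 0 ≤ α) (hγ₀ : 0 ≤ γ) (hγ : γ ≤ 1)
    (hb : b ≤ 1) (hc : 0 ≤ c) :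
    eLpNorm (fun ζ => wgt α s ζ *
        (c * ((Icc (γ / 2) γ ×ˢ Icc b (2 * b)).indicator (fun _ => (1 : ℝ)) ζ +
          (-(Icc (γ / 2) γ ×ˢ Icc b (2 * b))).indicator (fun _ => (1 : ℝ)) ζ))) 2 volume
      ≤ ENNReal.ofReal (2 * (√(γ * b / 2) * (26 ^ (|s| / 2) * c))) := by
  refine eLpNorm_wgt_mul_indicator_add_indicator_neg_le (measurableSet_Icc.prod measurableSet_Icc)
    hc (fun ζ hζ => mul_le_mul_of_nonneg_right (wgt_le_of_mem_Icc_prod_Icc hα hγ hb hζ) hc) ?_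
  rw [volume_Icc_prod_Icc, ← ENNReal.ofReal_mul (by linarith)]
  exact ENNReal.ofReal_le_ofReal (le_of_eq (by ring))

lemma eLpNorm_wgt_high_freq_le {α s N γ b c : ℝ} (hα : α ∈ Icc 0 2) (hN : 1 ≤ N)
    (hγ₀ : 0 ≤ γ) (hγ : γ ≤ N) (hb : b ≤ 1) (hc : 0 ≤ c) :
    eLpNorm (fun ζ => wgt α s ζ *
        (c * N ^ (-(α * s)) *
          ((Icc N (N + γ) ×ˢ Icc (-b) (-b / 2)).indicator (fun _ => (1 : ℝ)) ζ +
            (-(Icc N (N + γ) ×ˢ Icc (-b) (-b / 2))).indicator (fun _ => (1 : ℝ)) ζ))) 2 volume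
      ≤ ENNReal.ofReal (2 * (√(γ * b / 2) * (26 ^ (|s| / 2) * c))) := by
  refine eLpNorm_wgt_mul_indicator_add_indicator_neg_le (measurableSet_Icc.prod measurableSet_Icc)
    (by positivity) (fun ζ hζ => ?_) ?_
  · rw [← mul_assoc, mul_right_comm]
    exact mul_le_mul_of_nonneg_right (wgt_mul_rpow_le_of_mem_Icc_prod_Icc hα hN hγ hb hζ) hc
  · rw [volume_Icc_prod_Icc, ← ENNReal.ofReal_mul (by linarith)]
    exact ENNReal.ofReal_le_ofReal (le_of_eq (by ring))

lemma rpow_neg_mul_sqrt_rpow_le_one {γ : ℝ} (hγ : 0 < γ) (ε : ℝ) :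
    γ ^ (-((1 + ε) / 2)) * √(γ * γ ^ ε / 2) ≤ 1 :=
  calc γ ^ (-((1 + ε) / 2)) * √(γ * γ ^ ε / 2)
      ≤ γ ^ (-((1 + ε) / 2)) * √(γ ^ (1 + ε)) := by
        gcongr
        rw [Real.rpow_add hγ, Real.rpow_one]
        linarith [mul_pos hγ (Real.rpow_pos_of_pos hγ ε)]
    _ = 1 := by
        rw [Real.sqrt_eq_rpow, ← Real.rpow_mul hγ.le, ← Real.rpow_add hγ]
        ring_nf
        exact Real.rpow_zero γ

/-- `‖f_N‖_{E^s} ≤ C`, where `f_N` is given through its Fourier transform by the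
indicator formula; the `E^s` norm is computed on the Fourier side. -/
theorem stmt19 (α : ℝ) (hα : α ∈ Ico (1:ℝ) 2) (s δ ε : ℝ) (hδ : 0 < δ)
    (hε : ε ∈ Ioo (0:ℝ) 1) :
    ∃ C > (0:ℝ), ∀ N : ℝ, 2 ≤ N → ∀ γ : ℝ, γ = N ^ (-(α + δ)) →
      eLpNorm (fun ζ : ℝ × ℝ =>
          wgt α s ζ *
            (γ ^ (-((1 + ε) / 2)) *
              ((Icc (γ / 2) γ ×ˢ Icc (γ ^ ε) (2 * γ ^ ε)).indicator (fun _ => (1:ℝ)) ζ +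
               (-(Icc (γ / 2) γ ×ˢ Icc (γ ^ ε) (2 * γ ^ ε))).indicator (fun _ => (1:ℝ)) ζ) +
             γ ^ (-((1 + ε) / 2)) * N ^ (-(α * s)) *
              ((Icc N (N + γ) ×ˢ Icc (-(γ ^ ε)) (-(γ ^ ε) / 2)).indicator (fun _ => (1:ℝ)) ζ +
               (-(Icc N (N + γ) ×ˢ Icc (-(γ ^ ε)) (-(γ ^ ε) / 2))).indicator
                 (fun _ => (1:ℝ)) ζ))) 2 volume
        ≤ ENNReal.ofReal C := by
  set K : ℝ := 26 ^ (|s| / 2)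
  refine ⟨4 * K, by positivity, fun N hN γ hγ => ?_⟩
  have hα' : α ∈ Icc 0 2 := ⟨by linarith [hα.1], hα.2.le⟩
  have hγ₀ : 0 < γ := hγ ▸ Real.rpow_pos_of_pos (by linarith) _
  have hγ₁ : γ ≤ 1 := hγ ▸ Real.rpow_le_one_of_one_le_of_nonpos (by linarith) (by linarith [hα'.1])
  have hγε : γ ^ ε ≤ 1 := Real.rpow_le_one hγ₀.le hγ₁ hε.1.le
  set c := γ ^ (-((1 + ε) / 2))
  have hc : 0 ≤ c := by positivity
  have hcv : c * √(γ * γ ^ ε / 2) ≤ 1 := rpow_neg_mul_sqrt_rpow_le_one hγ₀ ε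
  calc _ ≤ _ := eLpNorm_mul_add_le one_le_two
        (measurable_wgt_mul_indicator_add_indicator_neg α s _
          (measurableSet_Icc.prod measurableSet_Icc)).aestronglyMeasurable
        (measurable_wgt_mul_indicator_add_indicator_neg α s _
          (measurableSet_Icc.prod measurableSet_Icc)).aestronglyMeasurable
    _ ≤ ENNReal.ofReal (2 * (√(γ * γ ^ ε / 2) * (K * c))) +
          ENNReal.ofReal (2 * (√(γ * γ ^ ε / 2) * (K * c))) :=
        add_le_add (eLpNorm_wgt_low_freq_le hα'.1 hγ₀.le hγ₁ hγε hc)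
          (eLpNorm_wgt_high_freq_le hα' (by linarith) hγ₀.le (by linarith) hγε hc)
    _ ≤ ENNReal.ofReal (4 * K) := by
        rw [← ENNReal.ofReal_add (by positivity) (by positivity)]
        exact ENNReal.ofReal_le_ofReal (by nlinarith [show 0 < K by positivity])
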